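/- arXiv:2104.03937 — 2 statements merged into one kernel-verified Lean document; each statement's English description precedes it below -/
import Mathlib

section
/- The class of B_0-VPG graphs (intersection graphs of horizontal and vertical segments in the plane) has unbounded thinness: for every r ≥ 2 there is a B_0-VPG graph of maximum degree 6 containing the r×r grid as a subgraph, hence with thinness at least r/6. -/
/-- An ordering (given by an injective labeling `f`) is consistent with a partition
(given by a class function `c`). -/
def ConsistentWith {V : Type*} {K : Type*} (G : SimpleGraph V) (f : V → ℕ) (c : V → K) : Prop :=
  ∀ u v w : V, f u < f v → f v < f w → c u = c v → G.Adj w u → G.Adj w v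

/-- The thinness of `G`. -/
noncomputable def thin {V : Type*} (G : SimpleGraph V) : ℕ :=
  sInf {k | ∃ f : V → ℕ, Function.Injective f ∧ ∃ c : V → Fin k, ConsistentWith G f c}

/-- An axis-parallel (horizontal or vertical) segment in the plane. -/
def IsAxisSegment (S : Set (ℝ × ℝ)) : Prop :=
  (∃ x a b : ℝ, a ≤ b ∧ S = {p | p.1 = x ∧ p.2 ∈ Set.Icc a b}) ∨
  (∃ y a b : ℝ, a ≤ b ∧ S = {p | p.2 = y ∧ p.1 ∈ Set.Icc a b})

/-- The `r × r` grid graph: vertices `(i, j)` with edges between vertices at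
Manhattan distance 1. -/
def gridGraph (r : ℕ) : SimpleGraph (Fin r × Fin r) where
  Adj p q := ((p.1.val : ℤ) - q.1.val).natAbs + ((p.2.val : ℤ) - q.2.val).natAbs = 1
  symm := by
    constructor
    intro p q h
    omega
  loopless := by constructor; intro p h; simp at h

/-!
The `r × r` grid is itself a `B₀`-VPG graph of maximum degree 4: even vertices become
horizontal segments and odd vertices vertical ones, each reaching just over its neighbours.
Its thinness is at least `r / 4`. In a consistent ordering, the boundary vertices of a prefix
`{f < t}` that share a class are all adjacent to one vertex beyond the prefix, so a prefix
boundary has at most `4 · thin` vertices; and every ordering of the grid has a prefix with at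
least `r` boundary vertices, one in each row or one in each column.
-/

open SimpleGraph

lemma le_ncard_of_injective {α β : Type*} [Finite β] {s : Set β} (g : α → β) (hg : g.Injective)
    (hs : ∀ a, g a ∈ s) : Nat.card α ≤ s.ncard := by
  rw [← Set.ncard_range_of_injective hg]
  exact Set.ncard_le_ncard (Set.range_subset_iff.2 hs)

section Thinness

variable {V : Type*} (G : SimpleGraph V)

def prefixBoundary (f : V → ℕ) (t : ℕ) : Set V :=
  {u | f u < t ∧ ∃ w, t ≤ f w ∧ G.Adj w u}

variable {G}

lemma exists_map_mem_prefixBoundary {W : Type*} {H : SimpleGraph W} (φ : H →g G)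
    (hH : H.Preconnected) {f : V → ℕ} {t : ℕ} {a b : W} (ha : f (φ a) < t) (hb : t ≤ f (φ b)) :
    ∃ x, φ x ∈ prefixBoundary G f t := by
  obtain ⟨p⟩ := hH a b
  obtain ⟨d, -, hd₁, hd₂⟩ := p.exists_boundary_dart {x | f (φ x) < t} ha hb.not_gt
  exact ⟨d.fst, hd₁, φ d.snd, not_lt.1 hd₂, (φ.map_adj d.adj).symm⟩

variable [Finite V] {Δ k : ℕ} {f : V → ℕ} {c : V → Fin k}

/-- The `f`-least boundary vertex of a class has a neighbour `w` beyond the prefix, and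
consistency makes every other boundary vertex of that class adjacent to `w` as well. -/
lemma ncard_prefixBoundary_inter_class_le (hdeg : ∀ v, (G.neighborSet v).ncard ≤ Δ)
    (hf : f.Injective) (hc : ConsistentWith G f c) (t : ℕ) (q : Fin k) :
    {u ∈ prefixBoundary G f t | c u = q}.ncard ≤ Δ := by
  obtain hempty | hne := Set.eq_empty_or_nonempty {u ∈ prefixBoundary G f t | c u = q}
  · simp [hempty]
  obtain ⟨u₀, ⟨⟨-, w, hw, hadj⟩, hu₀⟩, hmin⟩ := Set.exists_min_image _ f (Set.toFinite _) hne
  refine (Set.ncard_le_ncard (fun u hu => ?_)).trans (hdeg w)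
  have hle := hmin u hu
  obtain ⟨⟨hut, -⟩, huq⟩ := hu
  obtain h | h := hle.eq_or_lt
  · rwa [← hf h]
  · exact hc u₀ u w h (hut.trans_le hw) (hu₀.trans huq.symm) hadj

lemma ncard_prefixBoundary_le (hdeg : ∀ v, (G.neighborSet v).ncard ≤ Δ)
    (hf : f.Injective) (hc : ConsistentWith G f c) (t : ℕ) :
    (prefixBoundary G f t).ncard ≤ Δ * k :=
  calc (prefixBoundary G f t).ncard
      ≤ (⋃ q, {u ∈ prefixBoundary G f t | c u = q}).ncard :=
        Set.ncard_le_ncard fun u hu => Set.mem_iUnion.2 ⟨c u, hu, rfl⟩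
    _ ≤ ∑ q, {u ∈ prefixBoundary G f t | c u = q}.ncard := Set.ncard_iUnion_le_of_fintype _
    _ ≤ ∑ _q : Fin k, Δ :=
        Finset.sum_le_sum fun q _ => ncard_prefixBoundary_inter_class_le hdeg hf hc t q
    _ = Δ * k := by simp [mul_comm]

variable (G) in
lemma exists_consistentWith_thin :
    ∃ f : V → ℕ, f.Injective ∧ ∃ c : V → Fin (thin G), ConsistentWith G f c := by
  obtain ⟨n, ⟨e⟩⟩ := Finite.exists_equiv_fin V
  refine Nat.sInf_mem (s := {k | ∃ f : V → ℕ, f.Injective ∧ ∃ c : V → Fin k, ConsistentWith G f c})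
    ⟨n, fun v => e v, Fin.val_injective.comp e.injective, e, ?_⟩
  intro u v w huv _ hc
  simp [e.injective hc] at huv

theorem le_mul_thin {n : ℕ} (hdeg : ∀ v, (G.neighborSet v).ncard ≤ Δ)
    (hb : ∀ f : V → ℕ, f.Injective → ∃ t, n ≤ (prefixBoundary G f t).ncard) :
    n ≤ Δ * thin G := by
  obtain ⟨f, hf, c, hc⟩ := exists_consistentWith_thin G
  obtain ⟨t, ht⟩ := hb f hf
  exact ht.trans (ncard_prefixBoundary_le hdeg hf hc t)

end Thinness

section Grid

variable {r : ℕ}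

def gridRow (i : Fin r) : pathGraph r →g gridGraph r where
  toFun j := (i, j)
  map_rel' h := by simp only [gridGraph, pathGraph_adj] at *; omega

def gridColumn (j : Fin r) : pathGraph r →g gridGraph r where
  toFun i := (i, j)
  map_rel' h := by simp only [gridGraph, pathGraph_adj] at *; omega

/-- A neighbour of `v` is determined by whether it lies in the row of `v` and whether it is
nearer to the origin than `v`. -/
lemma ncard_neighborSet_gridGraph_le (v : Fin r × Fin r) :
    ((gridGraph r).neighborSet v).ncard ≤ 4 := by
  have key := Set.ncard_le_ncard_of_injOn (s := (gridGraph r).neighborSet v) (t := Set.univ)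
    (fun u : Fin r × Fin r => (decide (u.1 = v.1), decide (u.1.val + u.2 < v.1.val + v.2)))
    (fun _ _ => Set.mem_univ _) ?_ Set.finite_univ
  · simpa using key
  intro u hu w hw huw
  simp only [mem_neighborSet, gridGraph, Prod.mk.injEq, decide_eq_decide, Fin.ext_iff] at hu hw huw
  ext <;> omega

/-- Let `t₀` be the first time at which every row meets the prefix `{f < t₀}`. If no row is
contained in that prefix, every row crosses its boundary. Otherwise a full row survives at
time `t₀ - 1`, when some row is still disjoint from the prefix, so every column crosses the
boundary of `{f < t₀ - 1}`. -/
theorem exists_le_ncard_prefixBoundary_gridGraph (hr : 2 ≤ r) {f : Fin r × Fin r → ℕ}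
    (hf : f.Injective) : ∃ t, r ≤ (prefixBoundary (gridGraph r) f t).ncard := by
  have hrows : ∃ t, ∀ i : Fin r, ∃ j, f (i, j) < t :=
    ⟨Finset.univ.sup f + 1, fun i => ⟨⟨0, by omega⟩, Nat.lt_succ_of_le (Finset.le_sup (by simp))⟩⟩
  set t₀ := Nat.find hrows
  have hmeet : ∀ i : Fin r, ∃ j, f (i, j) < t₀ := Nat.find_spec hrows
  by_cases hfull : ∃ i : Fin r, ∀ j, f (i, j) < t₀
  · obtain ⟨i₁, hi₁⟩ := hfull
    obtain ⟨i₀, hi₀⟩ : ∃ i₀ : Fin r, ∀ j, t₀ - 1 ≤ f (i₀, j) := by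
      have ht₀ : 0 < t₀ := (hi₁ ⟨0, by omega⟩).pos
      simpa using Nat.find_min hrows (m := t₀ - 1) (by omega)
    have hi₁' : ∀ j, f (i₁, j) < t₀ - 1 := by
      intro j
      by_contra! hj
      obtain ⟨j₀, hj₀⟩ := hmeet i₀
      have h₀ : (i₀, j₀) = (i₁, j) := hf (by have := hi₀ j₀; have := hi₁ j; omega)
      obtain rfl : i₀ = i₁ := congrArg Prod.fst h₀
      have := Fin.nontrivial_iff_two_le.2 hr
      obtain ⟨j', hj'⟩ := exists_ne j
      have h' : (i₀, j') = (i₀, j) := hf (by have := hi₀ j'; have := hi₁ j'; have := hi₁ j; omega)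
      exact hj' (Prod.ext_iff.1 h').2
    choose x hx using fun j =>
      exists_map_mem_prefixBoundary (gridColumn j) (pathGraph_preconnected r) (hi₁' j) (hi₀ j)
    have := le_ncard_of_injective (fun j => (x j, j)) (fun j j' h => (Prod.ext_iff.1 h).2) hx
    exact ⟨t₀ - 1, by simpa using this⟩
  · push Not at hfull
    choose x hx using fun i => exists_map_mem_prefixBoundary (gridRow i)
      (pathGraph_preconnected r) (hmeet i).choose_spec (hfull i).choose_spec
    have := le_ncard_of_injective (fun i => (i, x i)) (fun i i' h => (Prod.ext_iff.1 h).1) hx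
    exact ⟨t₀, by simpa using this⟩

end Grid

section Segments

def horizSeg (y a b : ℝ) : Set (ℝ × ℝ) := {p | p.2 = y ∧ p.1 ∈ Set.Icc a b}

def vertSeg (x a b : ℝ) : Set (ℝ × ℝ) := {p | p.1 = x ∧ p.2 ∈ Set.Icc a b}

variable {x y a b c d : ℝ}

lemma isAxisSegment_horizSeg (h : a ≤ b) : IsAxisSegment (horizSeg y a b) :=
  Or.inr ⟨y, a, b, h, rfl⟩

lemma isAxisSegment_vertSeg (h : a ≤ b) : IsAxisSegment (vertSeg x a b) :=
  Or.inl ⟨x, a, b, h, rfl⟩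

lemma horizSeg_inter_vertSeg_nonempty_iff :
    (horizSeg y a b ∩ vertSeg x c d).Nonempty ↔ x ∈ Set.Icc a b ∧ y ∈ Set.Icc c d := by
  constructor
  · rintro ⟨p, ⟨rfl, hp₁⟩, hx, hp₂⟩
    exact ⟨hx ▸ hp₁, hp₂⟩
  · rintro ⟨hx, hy⟩
    exact ⟨(x, y), ⟨rfl, hx⟩, rfl, hy⟩

lemma vertSeg_inter_horizSeg_nonempty_iff :
    (vertSeg x c d ∩ horizSeg y a b).Nonempty ↔ x ∈ Set.Icc a b ∧ y ∈ Set.Icc c d := by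
  rw [Set.inter_comm, horizSeg_inter_vertSeg_nonempty_iff]

lemma horizSeg_inter_horizSeg_nonempty_iff {y' : ℝ} (hab : a ≤ b) (hcd : c ≤ d) :
    (horizSeg y a b ∩ horizSeg y' c d).Nonempty ↔ y = y' ∧ a ≤ d ∧ c ≤ b := by
  constructor
  · rintro ⟨p, ⟨rfl, ha, hb⟩, hy, hc, hd⟩
    exact ⟨hy, ha.trans hd, hc.trans hb⟩
  · rintro ⟨rfl, had, hcb⟩
    exact ⟨(max a c, y), ⟨rfl, le_max_left _ _, max_le hab hcb⟩, rfl, le_max_right _ _,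
      max_le had hcd⟩

lemma vertSeg_inter_vertSeg_nonempty_iff {x' : ℝ} (hab : a ≤ b) (hcd : c ≤ d) :
    (vertSeg x a b ∩ vertSeg x' c d).Nonempty ↔ x = x' ∧ a ≤ d ∧ c ≤ b := by
  constructor
  · rintro ⟨p, ⟨rfl, ha, hb⟩, hx, hc, hd⟩
    exact ⟨hx, ha.trans hd, hc.trans hb⟩
  · rintro ⟨rfl, had, hcb⟩
    exact ⟨(x, max a c), ⟨rfl, le_max_left _ _, max_le hab hcb⟩, rfl, le_max_right _ _,
      max_le had hcd⟩

end Segments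

section GridSegments

variable {r : ℕ}

def stagger (n : ℕ) : ℤ := if n % 4 ≤ 1 then 1 else -1

lemma stagger_cases (n : ℕ) : n % 4 ≤ 1 ∧ stagger n = 1 ∨ 1 < n % 4 ∧ stagger n = -1 := by
  unfold stagger
  split_ifs with h
  · exact Or.inl ⟨h, rfl⟩
  · exact Or.inr ⟨by omega, rfl⟩

/-- Even vertices `(i, j)` become horizontal segments, odd ones vertical segments, centred
near `(4i, 4j)` and reaching over the centres of the four neighbours. Two vertices of equal
parity two steps apart in a row (or column) would give touching collinear segments; the
`stagger` shifts them to different lines. -/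
def gridSeg (v : Fin r × Fin r) : Set (ℝ × ℝ) :=
  if (v.1.val + v.2.val) % 2 = 0 then
    horizSeg (4 * v.2.val + stagger v.1 : ℤ) (4 * v.1.val - 5 : ℤ) (4 * v.1.val + 5 : ℤ)
  else
    vertSeg (4 * v.1.val + stagger v.2 : ℤ) (4 * v.2.val - 5 : ℤ) (4 * v.2.val + 5 : ℤ)

lemma isAxisSegment_gridSeg (v : Fin r × Fin r) : IsAxisSegment (gridSeg v) := by
  unfold gridSeg
  split_ifs
  · exact isAxisSegment_horizSeg (Int.cast_le.2 (by omega))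
  · exact isAxisSegment_vertSeg (Int.cast_le.2 (by omega))

lemma gridGraph_adj_iff_gridSeg (u v : Fin r × Fin r) :
    (gridGraph r).Adj u v ↔ u ≠ v ∧ (gridSeg u ∩ gridSeg v).Nonempty := by
  have h4 : ∀ n : ℕ, ((4 * n - 5 : ℤ) : ℝ) ≤ (4 * n + 5 : ℤ) := fun n => Int.cast_le.2 (by omega)
  unfold gridSeg
  split_ifs with hu hv hv <;>
    simp only [horizSeg_inter_horizSeg_nonempty_iff (h4 _) (h4 _),
      vertSeg_inter_vertSeg_nonempty_iff (h4 _) (h4 _), horizSeg_inter_vertSeg_nonempty_iff,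
      vertSeg_inter_horizSeg_nonempty_iff, Int.cast_inj, Int.cast_le, Set.mem_Icc, gridGraph,
      ne_eq, Prod.ext_iff, Fin.ext_iff]
  · rcases stagger_cases u.1 with h₁ | h₁ <;> rcases stagger_cases v.1 with h₂ | h₂ <;> omega
  · rcases stagger_cases u.1 with h₁ | h₁ <;> rcases stagger_cases v.2 with h₂ | h₂ <;> omega
  · rcases stagger_cases u.2 with h₁ | h₁ <;> rcases stagger_cases v.1 with h₂ | h₂ <;> omega
  · rcases stagger_cases u.2 with h₁ | h₁ <;> rcases stagger_cases v.2 with h₂ | h₂ <;> omega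

end GridSegments

/-- The class of `B₀`-VPG graphs (intersection graphs of horizontal and vertical
segments in the plane) has unbounded thinness: for every `r ≥ 2` there is a `B₀`-VPG
graph of maximum degree at most 6 containing the `r × r` grid as a subgraph, hence with
thinness at least `r / 6`. -/
theorem b0vpg_unbounded_thinness :
    ∀ r : ℕ, 2 ≤ r →
      ∃ (V : Type) (_ : Fintype V) (G : SimpleGraph V),
        (∃ seg : V → Set (ℝ × ℝ), (∀ v, IsAxisSegment (seg v)) ∧
          ∀ u v : V, G.Adj u v ↔ u ≠ v ∧ (seg u ∩ seg v).Nonempty) ∧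
        (∀ v : V, (G.neighborSet v).ncard ≤ 6) ∧
        (∃ φ : (Fin r × Fin r) ↪ V,
          ∀ a b, (gridGraph r).Adj a b → G.Adj (φ a) (φ b)) ∧
        (r : ℝ) / 6 ≤ (thin G : ℝ) := by
  intro r hr
  have hthin : r ≤ 4 * thin (gridGraph r) := le_mul_thin ncard_neighborSet_gridGraph_le
    fun _ hf => exists_le_ncard_prefixBoundary_gridGraph hr hf
  refine ⟨Fin r × Fin r, inferInstance, gridGraph r, ⟨gridSeg, isAxisSegment_gridSeg,
    gridGraph_adj_iff_gridSeg⟩, fun v => (ncard_neighborSet_gridGraph_le v).trans (by norm_num),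
    ⟨Function.Embedding.refl _, fun _ _ h => h⟩, ?_⟩
  rw [div_le_iff₀ (by norm_num)]
  exact_mod_cast (by omega : r ≤ thin (gridGraph r) * 6)
end

section
/- A graph G is proper independent 2-thin if and only if G is bipartite and admits a bipartition (V^1,V^2) with linear orders on V^1 and V^2 such that the bipartite patterns R_1 and R_2 do not occur. -/
/-- The reverse of the ordering given by `f` is consistent with `c`. -/
def RevConsistentWith {V : Type*} {K : Type*} (G : SimpleGraph V) (f : V → ℕ) (c : V → K) : Prop :=
  ∀ u v w : V, f u < f v → f v < f w → c v = c w → G.Adj u w → G.Adj u v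

/-- `G` is proper independent 2-thin: it admits a vertex ordering and a partition into
two independent classes such that both the ordering and its reverse are consistent
with the partition. -/
def ProperIndepTwoThin {V : Type*} (G : SimpleGraph V) : Prop :=
  ∃ f : V → ℕ, Function.Injective f ∧ ∃ c : V → Fin 2,
    ConsistentWith G f c ∧ RevConsistentWith G f c ∧
    ∀ u v : V, c u = c v → ¬ G.Adj u v

/-- The bipartite pattern `R₁` occurs (for part orders given by `f`): `a₁ < a₂` in one
part and `b₁ < b₂` in the other with `a₁b₂, a₂b₁` edges and `a₁b₁` a non-edge. -/
def OccursR1 {V : Type*} (G : SimpleGraph V) (c : V → Fin 2) (f : V → ℕ) : Prop :=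
  ∃ a1 a2 b1 b2 : V, c a1 = c a2 ∧ c b1 = c b2 ∧ c a1 ≠ c b1 ∧
    f a1 < f a2 ∧ f b1 < f b2 ∧ G.Adj a1 b2 ∧ G.Adj a2 b1 ∧ ¬ G.Adj a1 b1

/-- The bipartite pattern `R₂` occurs: `a₁ < a₂` in one part and `b₁ < b₂` in the other
with `a₁b₂, a₂b₁` edges and `a₂b₂` a non-edge. -/
def OccursR2 {V : Type*} (G : SimpleGraph V) (c : V → Fin 2) (f : V → ℕ) : Prop :=
  ∃ a1 a2 b1 b2 : V, c a1 = c a2 ∧ c b1 = c b2 ∧ c a1 ≠ c b1 ∧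
    f a1 < f a2 ∧ f b1 < f b2 ∧ G.Adj a1 b2 ∧ G.Adj a2 b1 ∧ ¬ G.Adj a2 b2

/-!
Forward: in an occurrence of `R₁` compare `a₁` with `b₁`, in one of `R₂` compare `a₂` with `b₂`;
either way one of the two consistency conditions forces the missing edge.

Backward: keep the order `f` on the class-`1` vertices and insert every class-`0` vertex just
before its `f`-least neighbour (ties broken by `f`), with the isolated vertices put first.
Avoiding `R₁` makes the least neighbour monotone along class `0`, and avoiding `R₁` and `R₂`
makes every neighbourhood an interval of the non-isolated vertices of the other class; these two
facts give both consistency conditions for the merged order.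
-/

open Function

theorem exists_injective_nat_lt_iff_lt {α β : Type*} [Fintype α] [LinearOrder β] {k : α → β}
    (hk : Injective k) : ∃ g : α → ℕ, Injective g ∧ ∀ a b, g a < g b ↔ k a < k b := by
  classical
  let g a := (Finset.univ.filter fun x => k x < k a).card
  have hg : ∀ {a b}, k a < k b → g a < g b := fun {a b} hab =>
    Finset.card_lt_card <| (Finset.ssubset_iff_of_subset fun x => by simpa using hab.trans').2
      ⟨a, by simpa using hab, by simp⟩
  have hlt : ∀ a b, g a < g b ↔ k a < k b := fun a b => ⟨fun h => lt_of_not_ge fun hba =>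
    hba.eq_or_lt.elim (fun hba => (hk hba ▸ h).false) fun hba => (hg hba).not_gt h, hg⟩
  refine ⟨g, fun a b hab => ?_, hlt⟩
  by_contra hne
  rcases (hk.ne hne).lt_or_gt with h | h
  · exact ((hlt a b).2 h).ne hab
  · exact ((hlt b a).2 h).ne' hab

section PatternAvoidance

variable {V : Type*} {G : SimpleGraph V} {c : V → Fin 2} {f : V → ℕ}

theorem not_occursR1_of_revConsistentWith (hf : Injective f) (h : RevConsistentWith G f c) :
    ¬ OccursR1 G c f := by
  rintro ⟨a₁, a₂, b₁, b₂, ha, hb, hab, hfa, hfb, hab₂, hab₁, hn⟩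
  rcases lt_trichotomy (f a₁) (f b₁) with hlt | heq | hgt
  · exact hn (h a₁ b₁ b₂ hlt hfb hb hab₂)
  · exact hab (congrArg c (hf heq))
  · exact hn (h b₁ a₁ a₂ hgt hfa ha hab₁.symm).symm

theorem not_occursR2_of_consistentWith (hf : Injective f) (h : ConsistentWith G f c) :
    ¬ OccursR2 G c f := by
  rintro ⟨a₁, a₂, b₁, b₂, ha, hb, hab, hfa, hfb, hab₂, hab₁, hn⟩
  rcases lt_trichotomy (f a₂) (f b₂) with hlt | heq | hgt
  · exact hn (h a₁ a₂ b₂ hfa hlt ha hab₂.symm).symm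
  · exact hab (ha.trans ((congrArg c (hf heq)).trans hb.symm))
  · exact hn (h b₁ b₂ a₂ hfb hgt hb hab₁)


theorem adj_of_not_occursR1 (hc : ∀ u v, G.Adj u v → c u ≠ c v) (hR1 : ¬ OccursR1 G c f)
    {a₁ a₂ b₁ b₂ : V} (ha : c a₁ = c a₂) (hfa : f a₁ < f a₂) (hfb : f b₁ < f b₂)
    (hab₂ : G.Adj a₁ b₂) (hab₁ : G.Adj a₂ b₁) : G.Adj a₁ b₁ := by
  have := hc _ _ hab₂
  have := hc _ _ hab₁
  by_contra hn
  exact hR1 ⟨a₁, a₂, b₁, b₂, ha, by omega, by omega, hfa, hfb, hab₂, hab₁, hn⟩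

theorem adj_of_not_occursR2 (hc : ∀ u v, G.Adj u v → c u ≠ c v) (hR2 : ¬ OccursR2 G c f)
    {a₁ a₂ b₁ b₂ : V} (ha : c a₁ = c a₂) (hfa : f a₁ < f a₂) (hfb : f b₁ < f b₂)
    (hab₂ : G.Adj a₁ b₂) (hab₁ : G.Adj a₂ b₁) : G.Adj a₂ b₂ := by
  have := hc _ _ hab₂
  have := hc _ _ hab₁
  by_contra hn
  exact hR2 ⟨a₁, a₂, b₁, b₂, ha, by omega, by omega, hfa, hfb, hab₂, hab₁, hn⟩

theorem adj_of_between_adj (hf : Injective f) (hc : ∀ u v, G.Adj u v → c u ≠ c v)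
    (hR1 : ¬ OccursR1 G c f) (hR2 : ¬ OccursR2 G c f) {y w b₁ b₂ z : V}
    (hb₁ : G.Adj y b₁) (hb₂ : G.Adj y b₂) (hwz : G.Adj w z) (hyw : c y ≠ c w)
    (h₁ : f b₁ < f w) (h₂ : f w < f b₂) : G.Adj y w := by
  have hzy : c z = c y := by have := hc w z hwz; omega
  rcases lt_trichotomy (f z) (f y) with hlt | heq | hgt
  · exact adj_of_not_occursR2 hc hR2 hzy hlt h₁ hwz.symm hb₁
  · exact hf heq ▸ hwz.symm
  · exact adj_of_not_occursR1 hc hR1 hzy.symm hgt h₂ hb₂ hwz.symm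

end PatternAvoidance

section MergedOrder

variable {V : Type*} {G : SimpleGraph V} {c : V → Fin 2} {f : V → ℕ} {u v w : V}

noncomputable def minNeighborLabel (G : SimpleGraph V) (f : V → ℕ) (v : V) : ℕ :=
  sInf (f '' G.neighborSet v)

theorem minNeighborLabel_le (h : G.Adj v w) : minNeighborLabel G f v ≤ f w :=
  Nat.sInf_le ⟨w, h, rfl⟩

theorem exists_adj_eq_minNeighborLabel (h : (G.neighborSet v).Nonempty) :
    ∃ w, G.Adj v w ∧ f w = minNeighborLabel G f v :=
  Nat.sInf_mem (h.image f)

theorem minNeighborLabel_mono (hc : ∀ u v, G.Adj u v → c u ≠ c v) (hR1 : ¬ OccursR1 G c f)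
    (huv : c u = c v) (hf : f u < f v) (hv : (G.neighborSet v).Nonempty) :
    minNeighborLabel G f u ≤ minNeighborLabel G f v := by
  by_contra! hlt
  have hu : (G.neighborSet u).Nonempty :=
    (Nat.nonempty_of_pos_sInf (s := f '' G.neighborSet u) (Nat.zero_lt_of_lt hlt)).of_image
  obtain ⟨a, hua, ha⟩ := exists_adj_eq_minNeighborLabel (f := f) hu
  obtain ⟨b, hvb, hb⟩ := exists_adj_eq_minNeighborLabel (f := f) hv
  have := minNeighborLabel_le (f := f) (adj_of_not_occursR1 hc hR1 huv hf (by omega) hua hvb)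
  omega

open Classical in
noncomputable def mergeSlot (G : SimpleGraph V) (c : V → Fin 2) (f : V → ℕ) (v : V) : ℕ :=
  if (G.neighborSet v).Nonempty then (if c v = 0 then minNeighborLabel G f v else f v) + 1
  else 0

/-- A class-`0` vertex shares the slot of its least neighbour `b`, namely `f b + 1`, and precedes
it because the class is compared next. -/
noncomputable def mergeKey (G : SimpleGraph V) (c : V → Fin 2) (f : V → ℕ) (v : V) :
    ℕ ×ₗ Fin 2 ×ₗ ℕ :=
  toLex (mergeSlot G c f v, toLex (c v, f v))

theorem mergeSlot_of_eq_zero (hv : (G.neighborSet v).Nonempty) (h : c v = 0) :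
    mergeSlot G c f v = minNeighborLabel G f v + 1 := by
  simp [mergeSlot, hv, h]

theorem mergeSlot_of_eq_one (hv : (G.neighborSet v).Nonempty) (h : c v = 1) :
    mergeSlot G c f v = f v + 1 := by
  simp [mergeSlot, hv, h]

theorem mergeKey_injective (hf : Injective f) : Injective (mergeKey G c f) :=
  fun _ _ h => hf (congrArg (fun k => (ofLex (ofLex k).2).2) h)

theorem mergeKey_lt_mergeKey_iff : mergeKey G c f u < mergeKey G c f v ↔
    mergeSlot G c f u < mergeSlot G c f v ∨
      mergeSlot G c f u = mergeSlot G c f v ∧ (c u < c v ∨ c u = c v ∧ f u < f v) := by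
  simp [mergeKey, Prod.Lex.toLex_lt_toLex]

theorem mergeKey_lt_of_not_nonempty (hv : ¬ (G.neighborSet v).Nonempty)
    (hu : (G.neighborSet u).Nonempty) : mergeKey G c f v < mergeKey G c f u := by
  simp only [mergeKey_lt_mergeKey_iff, mergeSlot, hv, hu, if_false, if_true]
  omega

theorem mergeKey_lt_of_adj (hc : ∀ u v, G.Adj u v → c u ≠ c v) (hu : c u = 1) (h : G.Adj u w) :
    mergeKey G c f w < mergeKey G c f u := by
  have hw : c w = 0 := by have := hc u w h; omega
  rw [mergeKey_lt_mergeKey_iff, mergeSlot_of_eq_zero ⟨u, h.symm⟩ hw, mergeSlot_of_eq_one ⟨w, h⟩ hu]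
  have := minNeighborLabel_le (f := f) h.symm
  omega

theorem mergeKey_consistent (hf : Injective f) (hc : ∀ u v, G.Adj u v → c u ≠ c v)
    (hR1 : ¬ OccursR1 G c f) (hR2 : ¬ OccursR2 G c f)
    (h₁ : mergeKey G c f u < mergeKey G c f v) (h₂ : mergeKey G c f v < mergeKey G c f w)
    (huv : c u = c v) (hwu : G.Adj w u) : G.Adj w v := by
  have := hc w u hwu
  obtain hu | hu : c u = 0 ∨ c u = 1 := by omega
  · have hv : (G.neighborSet v).Nonempty := by
      by_contra hv
      exact lt_asymm h₁ (mergeKey_lt_of_not_nonempty hv ⟨w, hwu.symm⟩)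
    have hfuv : f u < f v := by
      rcases lt_trichotomy (f u) (f v) with hlt | heq | hgt
      · exact hlt
      · exact absurd h₁ (hf heq ▸ lt_irrefl _)
      · have := minNeighborLabel_mono hc hR1 huv.symm hgt ⟨w, hwu.symm⟩
        rw [mergeKey_lt_mergeKey_iff, mergeSlot_of_eq_zero ⟨w, hwu.symm⟩ hu,
          mergeSlot_of_eq_zero hv (huv ▸ hu)] at h₁
        omega
    rw [mergeKey_lt_mergeKey_iff, mergeSlot_of_eq_zero hv (huv ▸ hu),
      mergeSlot_of_eq_one ⟨u, hwu⟩ (by omega)] at h₂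
    obtain ⟨b, hvb, hb⟩ := exists_adj_eq_minNeighborLabel (f := f) hv
    rcases (show f b ≤ f w by omega).eq_or_lt with heq | hlt
    · exact (hf heq ▸ hvb).symm
    · exact (adj_of_not_occursR2 hc hR2 huv hfuv hlt hwu.symm hvb).symm
  · exact absurd (h₁.trans h₂) (mergeKey_lt_of_adj hc hu hwu.symm).not_gt

theorem mergeKey_revConsistent (hf : Injective f) (hc : ∀ u v, G.Adj u v → c u ≠ c v)
    (hR1 : ¬ OccursR1 G c f) (hR2 : ¬ OccursR2 G c f)
    (h₁ : mergeKey G c f u < mergeKey G c f v) (h₂ : mergeKey G c f v < mergeKey G c f w)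
    (hvw : c v = c w) (huw : G.Adj u w) : G.Adj u v := by
  have := hc u w huw
  obtain hu | hu : c u = 0 ∨ c u = 1 := by omega
  · have hv : (G.neighborSet v).Nonempty := by
      by_contra hv
      exact lt_asymm h₁ (mergeKey_lt_of_not_nonempty hv ⟨w, huw⟩)
    rw [mergeKey_lt_mergeKey_iff, mergeSlot_of_eq_zero ⟨w, huw⟩ hu,
      mergeSlot_of_eq_one hv (by omega)] at h₁
    rw [mergeKey_lt_mergeKey_iff, mergeSlot_of_eq_one hv (by omega),
      mergeSlot_of_eq_one ⟨u, huw.symm⟩ (by omega)] at h₂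
    obtain ⟨b, hub, hb⟩ := exists_adj_eq_minNeighborLabel (f := f) ⟨w, huw⟩
    obtain ⟨z, hvz⟩ := hv
    rcases (show f b ≤ f v by omega).eq_or_lt with heq | hlt
    · exact hf heq ▸ hub
    · exact adj_of_between_adj hf hc hR1 hR2 hub huw hvz (by omega) hlt (by omega)
  · exact absurd (h₁.trans h₂) (mergeKey_lt_of_adj hc hu huw).not_gt

end MergedOrder

/-- A graph `G` is proper independent 2-thin if and only if `G` is bipartite and
admits a bipartition `(V¹, V²)` with linear orders on `V¹` and `V²` such that the
bipartite patterns `R₁` and `R₂` do not occur. -/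
theorem properIndepTwoThin_iff_bipartite_avoids_R1_R2 {V : Type*} [Fintype V]
    (G : SimpleGraph V) :
    ProperIndepTwoThin G ↔ ∃ c : V → Fin 2, (∀ u v : V, G.Adj u v → c u ≠ c v) ∧
      ∃ f : V → ℕ, Function.Injective f ∧ ¬ OccursR1 G c f ∧ ¬ OccursR2 G c f := by
  constructor
  · rintro ⟨f, hf, c, hcons, hrev, hindep⟩
    exact ⟨c, fun u v h huv => hindep u v huv h, f, hf,
      not_occursR1_of_revConsistentWith hf hrev, not_occursR2_of_consistentWith hf hcons⟩
  · rintro ⟨c, hc, f, hf, hR1, hR2⟩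
    obtain ⟨g, hg, hgk⟩ := exists_injective_nat_lt_iff_lt (mergeKey_injective (G := G) (c := c) hf)
    refine ⟨g, hg, c, fun u v w h₁ h₂ => ?_, fun u v w h₁ h₂ => ?_, fun u v huv h => hc u v h huv⟩
    · exact mergeKey_consistent hf hc hR1 hR2 ((hgk u v).1 h₁) ((hgk v w).1 h₂)
    · exact mergeKey_revConsistent hf hc hR1 hR2 ((hgk u v).1 h₁) ((hgk v w).1 h₂)
end
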